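/- Let N ≤ M and suppose π ∈ S_M is such that every cycle of π contains at most one element greater than N. Then π is uniquely determined by its restriction to {1,...,N} together with the requirement that every element i > N not in π({1,...,N}) is a fixed point. -/

import Mathlib

/-!
Let `S` be a set on which `σ` and `τ` agree, and let `x ∉ S` be the only point of its
`σ`-cycle and of its `τ`-cycle outside `S`. The `τ`-cycle of `x`, read from `τ x` back to `x`,
runs inside `S`, where `σ = τ`, so `τ x` lies in the `σ`-cycle of `x`. Hence so does
`w = σ.symm (τ x)`. If `w ∈ S` then `τ w = σ w = τ x`, and otherwise `w` is the point of the
`σ`-cycle of `x` outside `S`; either way `w = x`, that is `σ x = τ x`.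
-/

namespace Equiv.Perm

variable {α : Type*} {σ τ : Perm α} {S : Set α} {x : α}

theorem pow_apply_eq_of_eqOn (h : Set.EqOn σ τ S) {a : α} :
    ∀ {n : ℕ}, (∀ k < n, (τ ^ k) a ∈ S) → (σ ^ n) a = (τ ^ n) a
  | 0, _ => rfl
  | n + 1, hS => by
    rw [pow_succ', mul_apply, pow_apply_eq_of_eqOn h fun k hk => hS k (by omega),
      h (hS n (by omega)), ← mul_apply, ← pow_succ']

theorem sameCycle_apply_of_eqOn [Finite α] (h : Set.EqOn σ τ S)
    (hτ : ∀ y, τ.SameCycle x y → y ∉ S → y = x) : σ.SameCycle x (τ x) := by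
  set m := Function.minimalPeriod τ x
  have hm : 0 < m :=
    Function.minimalPeriod_pos_of_mem_periodicPts (τ.injective.mem_periodicPts x)
  have hS : ∀ k < m - 1, (τ ^ k) (τ x) ∈ S := by
    intro k hk
    by_contra hkS
    have hback : (τ ^ (k + 1)) x = x := by
      rw [pow_succ, mul_apply]
      exact hτ _ ⟨((k + 1 : ℕ) : ℤ), by rw [zpow_natCast, pow_succ, mul_apply]⟩ hkS
    refine Function.not_isPeriodicPt_of_pos_of_lt_minimalPeriod (f := τ) (x := x) (n := k + 1)
      (by omega) (by omega) ?_
    rwa [Function.IsPeriodicPt, Function.IsFixedPt, iterate_eq_pow]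
  refine SameCycle.symm ⟨(m - 1 : ℕ), ?_⟩
  rw [zpow_natCast, pow_apply_eq_of_eqOn h hS, ← mul_apply, ← pow_succ,
    Nat.sub_add_cancel hm, ← iterate_eq_pow, Function.iterate_minimalPeriod]

theorem apply_eq_of_eqOn_of_sameCycle [Finite α] (h : Set.EqOn σ τ S)
    (hσ : ∀ y, σ.SameCycle x y → y ∉ S → y = x) (hτ : ∀ y, τ.SameCycle x y → y ∉ S → y = x) :
    σ x = τ x := by
  have hw : σ.SameCycle x (σ.symm (τ x)) := by
    rw [← sameCycle_apply_right, Equiv.apply_symm_apply]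
    exact sameCycle_apply_of_eqOn h hτ
  have hwx : σ.symm (τ x) = x := by
    by_cases hwS : σ.symm (τ x) ∈ S
    · exact τ.injective (by rw [← h hwS, Equiv.apply_symm_apply])
    · exact hσ _ hw hwS
  rw [← σ.apply_symm_apply (τ x), hwx]

theorem eq_of_eqOn_of_sameCycle [Finite α] (h : Set.EqOn σ τ S)
    (hσ : ∀ x y, σ.SameCycle x y → x ∉ S → y ∉ S → x = y)
    (hτ : ∀ x y, τ.SameCycle x y → x ∉ S → y ∉ S → x = y) : σ = τ := by
  ext x
  by_cases hx : x ∈ S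
  · rw [h hx]
  · rw [apply_eq_of_eqOn_of_sameCycle h (fun y hy hyS => (hσ x y hy hx hyS).symm)
      (fun y hy hyS => (hτ x y hy hx hyS).symm)]

end Equiv.Perm

theorem configuration_unique_extension_general (N M : ℕ)
    (π π' : Equiv.Perm (Fin M))
    (hcyc : ∀ i j : Fin M, π.SameCycle i j → N ≤ i.val → N ≤ j.val → i = j)
    (hcyc' : ∀ i j : Fin M, π'.SameCycle i j → N ≤ i.val → N ≤ j.val → i = j)
    (hagree : ∀ j : Fin M, j.val < N → π j = π' j) :
    π = π' :=
  Equiv.Perm.eq_of_eqOn_of_sameCycle (S := {j | j.val < N}) (fun j hj => hagree j hj)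
    (fun i j h hi hj => hcyc i j h (not_lt.1 hi) (not_lt.1 hj))
    (fun i j h hi hj => hcyc' i j h (not_lt.1 hi) (not_lt.1 hj))

/-- A configuration is uniquely determined by its restriction to `{1,…,N}` together
with the requirements that each cycle contains at most one element of value greater
than `N` and that every element `i > N` not in the image of `{1,…,N}` is fixed.
(In `Fin M`, the elements of value greater than `N` are those with `N ≤ i.val`.) -/
theorem configuration_unique_extension (N M : ℕ) (hNM : N ≤ M)
    (π π' : Equiv.Perm (Fin M))
    (hcyc : ∀ i j : Fin M, π.SameCycle i j → N ≤ i.val → N ≤ j.val → i = j)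
    (hcyc' : ∀ i j : Fin M, π'.SameCycle i j → N ≤ i.val → N ≤ j.val → i = j)
    (hfix : ∀ i : Fin M, N ≤ i.val → (∀ j : Fin M, j.val < N → π j ≠ i) → π i = i)
    (hfix' : ∀ i : Fin M, N ≤ i.val → (∀ j : Fin M, j.val < N → π' j ≠ i) → π' i = i)
    (hagree : ∀ j : Fin M, j.val < N → π j = π' j) :
    π = π' :=
  configuration_unique_extension_general N M π π' hcyc hcyc' hagree
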